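/- Let a ∈ ℂ with a ∉ {-1, 0, 2, 1/2}, let f = 1 + a, and set d = 1 + 2a, g = 3a - 1. Define A = [[a, a-2, a-2], [-2a+1, d, -2a+1], [f, f, g]], B = [[a-2, -a+2, -a+2], [2a-1, -2a+1, 2a-1], [-f, -f, f]], D = [[-a+3, 3a-3, -a-1], [-a+2, 3a-2, -3a], [3, 2a-1, -2a-1]], and C = B⁻¹A² - B⁻¹ABD B⁻¹·B + D²B⁻¹ chosen so that A²B - BCB - ABD + BD² = 0. Then C also satisfies CA² - DCA - CBC + D²C = 0, and the 6×6 block matrices S1 = [[A,B],[C,D]], S2 = [[A,-B],[-C,D]] satisfy the braid relation S1S2S1 = S2S1S2. -/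

import Mathlib

open Matrix

set_option maxHeartbeats 4000000 in
theorem stmt_6 (a : ℂ) (ha : a ≠ -1 ∧ a ≠ 0 ∧ a ≠ 2 ∧ a ≠ 1 / 2)
    (d g f : ℂ) (hd : d = 1 + 2 * a) (hg : g = 3 * a - 1) (hf : f = 1 + a)
    (A B D C : Matrix (Fin 3) (Fin 3) ℂ)
    (hA : A = !![a, a - 2, a - 2; -2 * a + 1, d, -2 * a + 1; f, f, g])
    (hB : B = !![a - 2, -a + 2, -a + 2; 2 * a - 1, -2 * a + 1, 2 * a - 1; -f, -f, f])
    (hD : D = !![-a + 3, 3 * a - 3, -a - 1; -a + 2, 3 * a - 2, -3 * a; 3, 2 * a - 1, -2 * a - 1])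
    (hC : C = B⁻¹ * (A ^ 2 * B - A * B * D + B * D ^ 2) * B⁻¹) :
    A ^ 2 * B - B * C * B - A * B * D + B * D ^ 2 = 0 ∧
    C * A ^ 2 - D * C * A - C * B * C + D ^ 2 * C = 0 ∧
    fromBlocks A B C D * fromBlocks A (-B) (-C) D * fromBlocks A B C D =
      fromBlocks A (-B) (-C) D * fromBlocks A B C D * fromBlocks A (-B) (-C) D := by
  obtain ⟨ha1, ha0, ha2, hah⟩ := ha
  have h2 : a - 2 ≠ 0 := sub_ne_zero.mpr ha2
  have h1 : (2 : ℂ) * a - 1 ≠ 0 := by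
    intro h; apply hah; field_simp; linear_combination h
  have hp : a + 1 ≠ 0 := by
    intro h; apply ha1; linear_combination h
  set e : ℂ := (a - 2) * ((2 * a - 1) * (a + 1)) with he_def
  have he : e ≠ 0 := mul_ne_zero h2 (mul_ne_zero h1 hp)
  set Bi : Matrix (Fin 3) (Fin 3) ℂ :=
    !![0, 1 / (2 * (2 * a - 1)), -1 / (2 * (a + 1));
       -1 / (2 * (a - 2)), 0, -1 / (2 * (a + 1));
       -1 / (2 * (a - 2)), 1 / (2 * (2 * a - 1)), 0] with hBi
  have hBBi : B * Bi = 1 := by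
    rw [hB, hf, hBi, Matrix.mul_fin_three, Matrix.one_fin_three]
    ext i j
    fin_cases i <;> fin_cases j <;>
      simp only [Fin.isValue, Fin.zero_eta, Fin.mk_one, show (⟨2, by norm_num⟩ : Fin 3) = 2 from rfl,
          Matrix.cons_val', Matrix.cons_val_zero, Matrix.cons_val_one, Matrix.head_cons,
          Matrix.empty_val', Matrix.cons_val_fin_one, Matrix.head_fin_const, Matrix.cons_val_two,
          Matrix.tail_cons, Matrix.of_apply] <;>
      field_simp <;>
      ring
  have hBinv : B⁻¹ = Bi := inv_eq_right_inv hBBi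
  have hX : A ^ 2 * B - A * B * D + B * D ^ 2 =
      !![12 - 18*a - 6*a^2 + 6*a^3, -12 + 18*a + 6*a^2 - 6*a^3, -4 + 6*a - 6*a^2 + 2*a^3;
         -2 - 6*a + 18*a^2 + 4*a^3, 6 - 6*a - 18*a^2 + 12*a^3, 2 - 6*a + 6*a^2 - 4*a^3;
         2 + 2*a^3, -2 + 12*a - 14*a^3, 2 - 12*a + 14*a^3] := by
    rw [hA, hB, hD, hd, hg, hf]
    ext i j
    fin_cases i <;> fin_cases j <;>
      · simp only [pow_two, Matrix.mul_apply, Fin.sum_univ_three, Matrix.sub_apply,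
          Matrix.add_apply, Fin.isValue, Fin.zero_eta, Fin.mk_one,
          show (⟨2, by norm_num⟩ : Fin 3) = 2 from rfl,
          Matrix.cons_val', Matrix.cons_val_zero, Matrix.cons_val_one, Matrix.head_cons,
          Matrix.empty_val', Matrix.cons_val_fin_one, Matrix.head_fin_const, Matrix.cons_val_two,
          Matrix.tail_cons, Matrix.of_apply]
        ring
  set N : Matrix (Fin 3) (Fin 3) ℂ :=
    !![(-1 - a) * e, (-1 + 7 * a - 4 * a ^ 2) * ((a - 2) * (a + 1)),
         (1 + 2 * a - 5 * a ^ 2) * ((a - 2) * (2 * a - 1));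
       (2 - 2 * a - a ^ 2) * ((2 * a - 1) * (a + 1)), -3 * a * e,
         (3 * a - 3 * a ^ 2) * ((a - 2) * (2 * a - 1));
       (4 - a - 2 * a ^ 2) * ((2 * a - 1) * (a + 1)),
         (1 + 2 * a - 2 * a ^ 2) * ((a - 2) * (a + 1)), (1 - 2 * a) * e] with hNdef
  have hN : e • C = N := by
    rw [hC, hX, hBinv, hBi, hNdef, he_def]
    ext i j
    fin_cases i <;> fin_cases j <;>
      · simp only [Matrix.mul_apply, Fin.sum_univ_three, Matrix.smul_apply, smul_eq_mul,
          Fin.isValue, Fin.zero_eta, Fin.mk_one, show (⟨2, by norm_num⟩ : Fin 3) = 2 from rfl,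
          Matrix.cons_val', Matrix.cons_val_zero, Matrix.cons_val_one, Matrix.head_cons,
          Matrix.empty_val', Matrix.cons_val_fin_one, Matrix.head_fin_const, Matrix.cons_val_two,
          Matrix.tail_cons, Matrix.of_apply]
        field_simp [h1, h2, hp, show a * 2 - 1 ≠ 0 by rwa [mul_comm] at h1]
        ring
  have hCe : C = e⁻¹ • N := by
    rw [← hN, smul_smul, inv_mul_cancel₀ he, one_smul]
  have hQ1 : B * N * B = e • (A ^ 2 * B - A * B * D + B * D ^ 2) := by
    rw [hX, hB, hf, hNdef, he_def]
    ext i j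
    fin_cases i <;> fin_cases j <;>
      · simp only [Matrix.mul_apply, Fin.sum_univ_three, Matrix.smul_apply, smul_eq_mul,
          Fin.isValue, Fin.zero_eta, Fin.mk_one, show (⟨2, by norm_num⟩ : Fin 3) = 2 from rfl,
          Matrix.cons_val', Matrix.cons_val_zero, Matrix.cons_val_one, Matrix.head_cons,
          Matrix.empty_val', Matrix.cons_val_fin_one, Matrix.head_fin_const, Matrix.cons_val_two,
          Matrix.tail_cons, Matrix.of_apply]
        ring
  have hQ : N * B * N = e • (N * A ^ 2 - D * N * A + D ^ 2 * N) := by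
    rw [hA, hB, hD, hd, hg, hf, hNdef, he_def]
    ext i j
    fin_cases i <;> fin_cases j <;>
      · simp only [pow_two, Matrix.mul_apply, Fin.sum_univ_three, Matrix.sub_apply,
          Matrix.add_apply, Matrix.smul_apply, smul_eq_mul, Fin.isValue, Fin.zero_eta, Fin.mk_one,
          show (⟨2, by norm_num⟩ : Fin 3) = 2 from rfl,
          Matrix.cons_val', Matrix.cons_val_zero, Matrix.cons_val_one, Matrix.head_cons,
          Matrix.empty_val', Matrix.cons_val_fin_one, Matrix.head_fin_const, Matrix.cons_val_two,
          Matrix.tail_cons, Matrix.of_apply]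
        ring
  have hBCB : B * C * B = A ^ 2 * B - A * B * D + B * D ^ 2 := by
    rw [hCe, Matrix.mul_smul, Matrix.smul_mul, hQ1, smul_smul, inv_mul_cancel₀ he, one_smul]
  have g1 : A ^ 2 * B - B * C * B - A * B * D + B * D ^ 2 = 0 := by
    rw [hBCB]; abel
  have hCA2 : C * A ^ 2 = e⁻¹ • (N * A ^ 2) := by rw [hCe, Matrix.smul_mul]
  have hDCA : D * C * A = e⁻¹ • (D * N * A) := by
    rw [hCe, Matrix.mul_smul, Matrix.smul_mul]
  have hD2C : D ^ 2 * C = e⁻¹ • (D ^ 2 * N) := by rw [hCe, Matrix.mul_smul]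
  have hCBC : C * B * C = e⁻¹ • (N * A ^ 2 - D * N * A + D ^ 2 * N) := by
    rw [hCe]
    have step : e⁻¹ • N * B * (e⁻¹ • N) = (e⁻¹ * e⁻¹) • (N * B * N) := by
      rw [Matrix.smul_mul, Matrix.smul_mul, Matrix.mul_smul, smul_smul]
    rw [step, hQ, smul_smul]
    congr 1
    field_simp
  have g2 : C * A ^ 2 - D * C * A - C * B * C + D ^ 2 * C = 0 := by
    rw [hCA2, hDCA, hCBC, hD2C]
    simp only [smul_sub, smul_add]
    abel
  refine ⟨g1, g2, ?_⟩
  simp only [Matrix.fromBlocks_multiply]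
  refine Matrix.fromBlocks_inj.mpr ⟨?_, ?_, ?_, ?_⟩
  · noncomm_ring
  · rw [← sub_eq_zero]
    have h : (A * A + B * -C) * B + (A * -B + B * D) * D -
        ((A * A + -B * C) * -B + (A * B + -B * D) * D) =
        (A ^ 2 * B - B * C * B - A * B * D + B * D ^ 2) +
          (A ^ 2 * B - B * C * B - A * B * D + B * D ^ 2) := by noncomm_ring
    rw [h, g1]; simp
  · rw [← sub_eq_zero]
    have h : (C * A + D * -C) * A + (C * -B + D * D) * C -
        ((-C * A + D * C) * A + (-C * B + D * D) * -C) =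
        (C * A ^ 2 - D * C * A - C * B * C + D ^ 2 * C) +
          (C * A ^ 2 - D * C * A - C * B * C + D ^ 2 * C) := by noncomm_ring
    rw [h, g2]; simp
  · noncomm_ring
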